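/- Let R be a Euclidean domain with units u, v satisfying u + v = 1. Then for every n ≥ 2, the abelianization of GL_n(R) is isomorphic to R^×, the group of units of R, with the isomorphism induced by the determinant. -/

import Mathlib

/-!
Over a Euclidean domain, the Euclidean algorithm run with row transvections reduces a column of
an invertible matrix to a single entry, which is then a unit; moving it to the diagonal and
rescaling with the dilation `diag(1, …, a, …, 1)` at a fixed index `i₀` normalises the column
without disturbing the columns already normalised. Hence `GL_n(R)` is generated by the
transvections and the dilations at `i₀`. If `u + v = 1` with `u, v` units, every transvection
`T(c)` is the commutator of `diag(u at i)` with `T(-v⁻¹ c)`, so transvections die in the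
abelianization; there `A` becomes `diag(det A at i₀)`, and `a ↦ diag(a at i₀)` inverts the
map induced by the determinant.
-/

open Matrix
open scoped commutatorElement

namespace Matrix

variable {m R : Type*} [Fintype m] [DecidableEq m]

section CommRing

variable [CommRing R]

theorem transvection_mulVec (i j : m) (c : R) (v : m → R) :
    transvection i j c *ᵥ v = v + Pi.single i (c * v j) := by
  ext k
  simp [transvection, add_mulVec, single_mulVec, Function.update_apply, Pi.single_apply]

theorem diagonal_mul_transvection {d : m → R} {i j : m} {c c' : R} (h : d i * c = c' * d j) :
    diagonal d * transvection i j c = transvection i j c' * diagonal d := by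
  ext a b
  simp only [diagonal_mul, mul_diagonal, transvection, add_apply, one_apply, single_apply]
  split_ifs <;> simp_all
  linear_combination h

namespace TransvectionStruct

def toGL (t : TransvectionStruct m R) : GL m R :=
  ⟨t.toMatrix, t.inv.toMatrix, t.mul_inv, t.inv_mul⟩

@[simp]
theorem coe_toGL (t : TransvectionStruct m R) : (t.toGL : Matrix m m R) = t.toMatrix :=
  rfl

end TransvectionStruct

end CommRing

namespace GeneralLinearGroup

open TransvectionStruct

section CommRing

variable [CommRing R]

variable (m R) in
def elementarySubgroup : Subgroup (GL m R) :=
  Subgroup.closure (Set.range toGL)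

theorem toGL_mem_elementarySubgroup (t : TransvectionStruct m R) :
    t.toGL ∈ elementarySubgroup m R :=
  Subgroup.subset_closure ⟨t, rfl⟩

def dilation (i : m) : Rˣ →* GL m R :=
  (Units.map (diagonalRingHom m R).toMonoidHom).comp
    (MulEquiv.piUnits.symm.toMonoidHom.comp (MonoidHom.mulSingle (fun _ => Rˣ) i))

@[simp]
theorem coe_dilation (i : m) (a : Rˣ) :
    (dilation i a : Matrix m m R) = diagonal (Pi.mulSingle i (a : R)) := by
  ext k l
  by_cases hk : k = i <;> simp [dilation, diagonal_apply, hk]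

@[simp]
theorem det_dilation (i : m) (a : Rˣ) : det (dilation i a) = a := by
  ext
  simp [det_diagonal, Pi.mulSingle_apply]

theorem dilation_mulVec_single (i : m) (a : Rˣ) (b : R) :
    (dilation i a : Matrix m m R) *ᵥ Pi.single i b = Pi.single i (a * b) := by
  ext k
  by_cases hk : k = i <;> simp [mulVec_diagonal, hk]

variable (R) in
def fixingBasisOutside (P : Finset m) : Subgroup (GL m R) where
  carrier := {g | ∀ l ∉ P, (g : Matrix m m R) *ᵥ Pi.single l 1 = Pi.single l 1}
  mul_mem' {a b} ha hb l hl := by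
    rw [coe_mul, ← mulVec_mulVec, hb l hl, ha l hl]
  one_mem' l _ := by rw [coe_one, one_mulVec]
  inv_mem' {a} ha l hl := by
    conv_lhs => rw [← ha l hl, mulVec_mulVec, ← coe_mul, inv_mul_cancel, coe_one, one_mulVec]

variable {P : Finset m}

theorem fixingBasisOutside_empty : fixingBasisOutside R (∅ : Finset m) = ⊥ := by
  refine (Subgroup.eq_bot_iff_forall _).2 fun g hg => ext fun i l => ?_
  have := congrFun (hg l (Finset.notMem_empty l)) i
  simpa [Pi.single_apply, one_apply, eq_comm] using this

theorem mem_fixingBasisOutside_erase {g : GL m R} {j : m} (hg : g ∈ fixingBasisOutside R P)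
    (hj : (g : Matrix m m R) *ᵥ Pi.single j 1 = Pi.single j 1) :
    g ∈ fixingBasisOutside R (P.erase j) := by
  intro l hl
  by_cases hlj : l = j
  · exact hlj ▸ hj
  · exact hg l fun h => hl (Finset.mem_erase.2 ⟨hlj, h⟩)

theorem toGL_mem_fixingBasisOutside {t : TransvectionStruct m R} (ht : t.j ∈ P) :
    t.toGL ∈ fixingBasisOutside R P := by
  intro l hl
  have : t.j ≠ l := fun h => hl (h ▸ ht)
  simp only [coe_toGL, toMatrix, transvection_mulVec]
  simp [this]

theorem dilation_mem_fixingBasisOutside {i : m} (hi : i ∈ P) (a : Rˣ) :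
    dilation i a ∈ fixingBasisOutside R P := by
  intro l hl
  have : l ≠ i := fun h => hl (h ▸ hi)
  ext k
  by_cases hk : k = l <;> simp [mulVec_diagonal, Pi.mulSingle_apply, hk, this]

theorem isUnit_mulVec_single_of_eq_zero_off {A : GL m R} (hA : A ∈ fixingBasisOutside R P)
    {j k : m} (hj : j ∈ P)
    (hzero : ∀ i ∈ P, i ≠ k → ((A : Matrix m m R) *ᵥ Pi.single j 1) i = 0) :
    IsUnit (((A : Matrix m m R) *ᵥ Pi.single j 1) k) := by
  -- row `j` of `A⁻¹` pairs with this column to `1`, and it vanishes outside `P`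
  set v := (A : Matrix m m R) *ᵥ Pi.single j 1
  have hinv : ((A⁻¹ : GL m R) : Matrix m m R) *ᵥ v = Pi.single j 1 := by
    rw [mulVec_mulVec, ← coe_mul, inv_mul_cancel, coe_one, one_mulVec]
  have hsum := congrFun hinv j
  rw [Pi.single_eq_same, mulVec, dotProduct, Finset.sum_eq_single k] at hsum
  · exact IsUnit.of_mul_eq_one_right _ hsum
  · intro i _ hik
    by_cases hi : i ∈ P
    · rw [hzero i hi hik, mul_zero]
    · have hcol := congrFun (inv_mem hA i hi) j
      have hji : j ≠ i := fun h => hi (h ▸ hj)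
      rw [mulVec_single_one, col_apply, Pi.single_eq_of_ne hji] at hcol
      rw [hcol, zero_mul]
  · exact fun h => absurd (Finset.mem_univ k) h

theorem exists_mulVec_single_eq_single {k l : m} (hk : k ∈ P) (hl : l ∈ P) (a : R) :
    ∃ g ∈ elementarySubgroup m R ⊓ fixingBasisOutside R P,
      (g : Matrix m m R) *ᵥ Pi.single k a = Pi.single l a := by
  by_cases hkl : k = l
  · exact ⟨1, one_mem _, by rw [hkl, coe_one, one_mulVec]⟩
  let t₁ : TransvectionStruct m R := ⟨l, k, Ne.symm hkl, 1⟩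
  let t₂ : TransvectionStruct m R := ⟨k, l, hkl, -1⟩
  refine ⟨t₂.toGL * t₁.toGL, mul_mem ⟨toGL_mem_elementarySubgroup t₂,
    toGL_mem_fixingBasisOutside hl⟩ ⟨toGL_mem_elementarySubgroup t₁,
    toGL_mem_fixingBasisOutside hk⟩, ?_⟩
  rw [coe_mul, ← mulVec_mulVec]
  simp only [t₁, t₂, coe_toGL, toMatrix, transvection_mulVec]
  ext i
  clear t₁ t₂
  simp only [Pi.add_apply, Pi.single_apply]
  split_ifs <;> simp_all

theorem exists_mulVec_single_eq_single_one {i₀ j k : m} (hi₀ : i₀ ∈ P) (hj : j ∈ P)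
    (hk : k ∈ P) (a : Rˣ) :
    ∃ g ∈ (elementarySubgroup m R ⊔ (dilation i₀).range) ⊓ fixingBasisOutside R P,
      (g : Matrix m m R) *ᵥ Pi.single k (a : R) = Pi.single j 1 := by
  obtain ⟨g₁, hg₁, h₁⟩ := exists_mulVec_single_eq_single hk hi₀ (a : R)
  obtain ⟨g₂, hg₂, h₂⟩ := exists_mulVec_single_eq_single hi₀ hj (1 : R)
  refine ⟨g₂ * dilation i₀ a⁻¹ * g₁,
    mul_mem (mul_mem ⟨Subgroup.mem_sup_left hg₂.1, hg₂.2⟩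
      ⟨Subgroup.mem_sup_right ⟨a⁻¹, rfl⟩, dilation_mem_fixingBasisOutside hi₀ _⟩)
      ⟨Subgroup.mem_sup_left hg₁.1, hg₁.2⟩, ?_⟩
  rw [coe_mul, coe_mul, ← mulVec_mulVec, ← mulVec_mulVec, h₁, dilation_mulVec_single,
    Units.inv_mul, h₂]

theorem toGL_mem_commutator (hu : ∃ u v : Rˣ, (u : R) + v = 1) (t : TransvectionStruct m R) :
    t.toGL ∈ commutator (GL m R) := by
  obtain ⟨u, v, huv⟩ := hu
  let t' : TransvectionStruct m R := ⟨t.i, t.j, t.hij, -(↑v⁻¹ * t.c)⟩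
  let t'' : TransvectionStruct m R := ⟨t.i, t.j, t.hij, t.c + t'.c⟩
  have hmul : t.toGL * t'.toGL = t''.toGL :=
    Units.ext (transvection_mul_transvection_same _ _ t.hij _ _)
  -- conjugating by `diag(u at i)` scales `T(c')` to `T(u c')`, so the commutator is `T(-v c')`
  have hconj : dilation t.i u * t'.toGL = t''.toGL * dilation t.i u := by
    refine Units.ext ?_
    rw [coe_mul, coe_mul, coe_dilation]
    refine diagonal_mul_transvection ?_
    simp only [Pi.mulSingle_eq_same, Pi.mulSingle_eq_of_ne t.hij.symm, t', t'']
    linear_combination -(↑v⁻¹ * t.c) * huv + t.c * v.mul_inv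
  have : t.toGL = ⁅dilation t.i u, t'.toGL⁆ := by
    rw [commutatorElement_def, hconj, ← hmul]
    group
  rw [this]
  exact Subgroup.commutator_mem_commutator (Subgroup.mem_top _) (Subgroup.mem_top _)

theorem elementarySubgroup_le_commutator (hu : ∃ u v : Rˣ, (u : R) + v = 1) :
    elementarySubgroup m R ≤ commutator (GL m R) :=
  (Subgroup.closure_le _).2 <| Set.range_subset_iff.2 (toGL_mem_commutator hu)

end CommRing

section EuclideanDomain

variable [EuclideanDomain R] {P : Finset m}

theorem exists_mulVec_eq_mod {k : m} (hk : k ∈ P) (v : m → R) (T : Finset m) (hkT : k ∉ T) :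
    ∃ g ∈ elementarySubgroup m R ⊓ fixingBasisOutside R P,
      (g : Matrix m m R) *ᵥ v = fun i => if i ∈ T then v i % v k else v i := by
  induction T using Finset.induction_on with
  | empty => exact ⟨1, one_mem _, by simp⟩
  | insert i T hiT ih =>
    obtain ⟨g, hg, hgv⟩ := ih fun h => hkT (Finset.mem_insert_of_mem h)
    have hik : i ≠ k := fun h => hkT (h ▸ Finset.mem_insert_self i T)
    let t : TransvectionStruct m R := ⟨i, k, hik, -(v i / v k)⟩
    refine ⟨t.toGL * g, mul_mem ⟨toGL_mem_elementarySubgroup t,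
      toGL_mem_fixingBasisOutside hk⟩ hg, ?_⟩
    rw [coe_mul, ← mulVec_mulVec, hgv]
    ext l
    by_cases hli : l = i
    · subst hli
      have hkT' : k ∉ T := fun h => hkT (Finset.mem_insert_of_mem h)
      simp [t, toMatrix, transvection_mulVec, hiT, hkT']
      linear_combination -EuclideanDomain.div_add_mod (v l) (v k)
    · simp [t, toMatrix, transvection_mulVec, hli]

theorem exists_mulVec_eq_zero_off_pivot_of_ne_zero {k : m} (hk : k ∈ P) {v : m → R}
    (hv : v k ≠ 0) :
    ∃ g ∈ elementarySubgroup m R ⊓ fixingBasisOutside R P, ∃ k' ∈ P,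
      ∀ i ∈ P, i ≠ k' → ((g : Matrix m m R) *ᵥ v) i = 0 := by
  obtain ⟨b, hb⟩ : ∃ b, v k = b := ⟨_, rfl⟩
  induction b using (EuclideanDomain.r_wellFounded (R := R)).induction generalizing v k with
  | _ b ih =>
    obtain ⟨g, hg, hgv⟩ := exists_mulVec_eq_mod hk v (P.erase k) (Finset.notMem_erase k P)
    by_cases hdone : ∀ i ∈ P, i ≠ k → ((g : Matrix m m R) *ᵥ v) i = 0
    · exact ⟨g, hg, k, hk, hdone⟩
    push Not at hdone
    obtain ⟨i, hi, hik, hne⟩ := hdone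
    have hgvi : ((g : Matrix m m R) *ᵥ v) i = v i % b := by simp [hgv, hi, hik, hb]
    have hlt : EuclideanDomain.r (v i % b) b := EuclideanDomain.mod_lt (v i) (hb ▸ hv)
    obtain ⟨g', hg', k', hk', hzero⟩ := ih _ hlt hi hne hgvi
    refine ⟨g' * g, mul_mem hg' hg, k', hk', fun l hl hlk => ?_⟩
    rw [coe_mul, ← mulVec_mulVec]
    exact hzero l hl hlk

theorem exists_mulVec_eq_zero_off_pivot (v : m → R) {j : m} (hj : j ∈ P) :
    ∃ g ∈ elementarySubgroup m R ⊓ fixingBasisOutside R P, ∃ k ∈ P,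
      ∀ i ∈ P, i ≠ k → ((g : Matrix m m R) *ᵥ v) i = 0 := by
  by_cases hzero : ∀ i ∈ P, v i = 0
  · exact ⟨1, one_mem _, j, hj, fun i hi _ => by rw [coe_one, one_mulVec, hzero i hi]⟩
  push Not at hzero
  obtain ⟨k, hk, hvk⟩ := hzero
  exact exists_mulVec_eq_zero_off_pivot_of_ne_zero hk hvk

theorem exists_mulVec_eq_single_of_isUnit {k : m} (hk : k ∈ P) {v : m → R} (hv : IsUnit (v k)) :
    ∃ g ∈ elementarySubgroup m R ⊓ fixingBasisOutside R P,
      (g : Matrix m m R) *ᵥ v = Pi.single k (v k) := by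
  obtain ⟨g, hg, hgv⟩ :=
    exists_mulVec_eq_mod hk v (Finset.univ.erase k) (Finset.notMem_erase k _)
  refine ⟨g, hg, hgv.trans (funext fun i => ?_)⟩
  by_cases hik : i = k
  · subst hik
    simp
  · simp [hik, EuclideanDomain.mod_eq_zero.2 hv.dvd]

theorem exists_mul_mulVec_single_eq_single {A : GL m R} (hA : A ∈ fixingBasisOutside R P)
    {i₀ j : m} (hi₀ : i₀ ∈ P) (hj : j ∈ P) :
    ∃ g ∈ (elementarySubgroup m R ⊔ (dilation i₀).range) ⊓ fixingBasisOutside R P,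
      ((g * A : GL m R) : Matrix m m R) *ᵥ Pi.single j 1 = Pi.single j 1 := by
  obtain ⟨g₁, hg₁, k, hk, hzero⟩ :=
    exists_mulVec_eq_zero_off_pivot ((A : Matrix m m R) *ᵥ Pi.single j 1) hj
  simp only [mulVec_mulVec, ← coe_mul] at hzero
  obtain ⟨a, ha⟩ := isUnit_mulVec_single_of_eq_zero_off (mul_mem hg₁.2 hA) hj hzero
  obtain ⟨g₂, hg₂, h₂⟩ := exists_mulVec_eq_single_of_isUnit hk (ha ▸ a.isUnit)
  obtain ⟨g₃, hg₃, h₃⟩ := exists_mulVec_single_eq_single_one hi₀ hj hk a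
  refine ⟨g₃ * g₂ * g₁, mul_mem (mul_mem hg₃ ⟨Subgroup.mem_sup_left hg₂.1, hg₂.2⟩)
    ⟨Subgroup.mem_sup_left hg₁.1, hg₁.2⟩, ?_⟩
  rw [mul_assoc, coe_mul, ← mulVec_mulVec, coe_mul, ← mulVec_mulVec, h₂, ← ha, h₃]

theorem mem_sup_range_dilation_of_mem_fixingBasisOutside {i₀ : m} (P : Finset m)
    (hi₀ : i₀ ∈ P) {A : GL m R} (hA : A ∈ fixingBasisOutside R P) :
    A ∈ elementarySubgroup m R ⊔ (dilation i₀).range := by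
  -- `i₀` is normalised last, so the dilations at `i₀` used on the way stay in the stabiliser
  induction P using Finset.strongInduction generalizing A with
  | H P ih =>
  suffices ∃ j ∈ P, ∀ B ∈ fixingBasisOutside R (P.erase j),
      B ∈ elementarySubgroup m R ⊔ (dilation i₀).range by
    obtain ⟨j, hj, hB⟩ := this
    obtain ⟨g, hg, hgA⟩ := exists_mul_mulVec_single_eq_single hA hi₀ hj
    have := mul_mem (inv_mem (Subgroup.mem_inf.1 hg).1)
      (hB _ (mem_fixingBasisOutside_erase (mul_mem hg.2 hA) hgA))
    rwa [inv_mul_cancel_left] at this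
  by_cases h : ∃ j ∈ P, j ≠ i₀
  · obtain ⟨j, hj, hji₀⟩ := h
    exact ⟨j, hj, fun B =>
      ih _ (Finset.erase_ssubset hj) (Finset.mem_erase.2 ⟨hji₀.symm, hi₀⟩)⟩
  · push Not at h
    refine ⟨i₀, hi₀, fun B hB => ?_⟩
    have hP : P.erase i₀ = ∅ := Finset.eq_empty_of_forall_notMem fun j hj =>
      (Finset.mem_erase.1 hj).1 (h j (Finset.mem_of_mem_erase hj))
    rw [hP, fixingBasisOutside_empty, Subgroup.mem_bot] at hB
    exact hB ▸ one_mem _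

theorem elementarySubgroup_sup_range_dilation (i₀ : m) :
    elementarySubgroup m R ⊔ (dilation i₀).range = ⊤ :=
  eq_top_iff.2 fun _ _ => mem_sup_range_dilation_of_mem_fixingBasisOutside Finset.univ
    (Finset.mem_univ i₀) fun l hl => absurd (Finset.mem_univ l) hl

theorem abelianization_of_eq_of_dilation_det (hu : ∃ u v : Rˣ, (u : R) + v = 1) (i₀ : m)
    (A : GL m R) :
    Abelianization.of A = Abelianization.of (dilation i₀ (det A)) := by
  let g : GL m R →* Abelianization (GL m R) := (Abelianization.of.comp (dilation i₀)).comp det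
  have hle : ⊤ ≤ MonoidHom.eqLocus (Abelianization.of (G := GL m R)) g := by
    rw [← elementarySubgroup_sup_range_dilation i₀]
    refine sup_le (fun x hx => ?_) ?_
    · have hx' := elementarySubgroup_le_commutator hu hx
      have hof : Abelianization.of x = 1 := (Abelianization.ker_of (GL m R) ▸ hx' :)
      exact hof.trans (Abelianization.commutator_subset_ker g hx').symm
    · rintro _ ⟨a, rfl⟩
      change Abelianization.of _ = Abelianization.of _
      rw [det_dilation]
  exact hle (Subgroup.mem_top A)

end EuclideanDomain

end GeneralLinearGroup

end Matrix

/-- If `R` is a Euclidean domain with units `u, v` satisfying `u + v = 1`,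
then for every `n ≥ 2` the abelianization of `GL_n(R)` is isomorphic to `R^×`, via the map
induced by the determinant. -/
theorem abelianization_GL_eq_units (R : Type*) [EuclideanDomain R]
    (hu : ∃ u v : Rˣ, (u : R) + (v : R) = 1) (n : ℕ) (hn : 2 ≤ n) :
    ∃ e : Abelianization (GL (Fin n) R) ≃* Rˣ,
      ∀ A : GL (Fin n) R,
        ((e (Abelianization.of A) : Rˣ) : R) = (A : Matrix (Fin n) (Fin n) R).det := by
  let i₀ : Fin n := ⟨0, by omega⟩
  refine ⟨(Abelianization.lift GeneralLinearGroup.det).toMulEquiv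
    (Abelianization.of.comp (GeneralLinearGroup.dilation i₀)) ?_ ?_, fun A => rfl⟩
  · refine Abelianization.hom_ext _ _ (MonoidHom.ext fun A => ?_)
    simp [GeneralLinearGroup.abelianization_of_eq_of_dilation_det hu i₀ A]
  · exact MonoidHom.ext fun a => by simp
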